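/- arXiv:math/0410545 — 2 statements merged into one kernel-verified Lean document; each statement's English description precedes it below -/
import Mathlib

section
/- Let P be a lazy, irreducible, aperiodic, reversible Markov chain on a finite state space K with stationary distribution π, and let 0 < ε < 1/2. Then the total variation mixing time satisfies τ(ε) ≥ ((1 − 4·ψ_big(1/2))/(8·ψ_big(1/2)))·log(1/(2ε)). -/
open Finset MeasureTheory

noncomputable section

attribute [local instance] Classical.propDecidable

variable {K : Type*} [Fintype K]

/-- `matPow P t u v` is the `t`-step transition probability from `u` to `v`. -/
def matPow (P : K → K → ℝ) : ℕ → K → K → ℝ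
  | 0 => fun u v => if u = v then 1 else 0
  | (t + 1) => fun u v => ∑ w, matPow P t u w * P w v

/-- `P` is a stochastic matrix with (strictly positive) stationary distribution `π`. -/
structure IsMarkov (P : K → K → ℝ) (π : K → ℝ) : Prop where
  nonneg : ∀ u v, 0 ≤ P u v
  rowSum : ∀ u, ∑ v, P u v = 1
  piPos : ∀ v, 0 < π v
  piSum : ∑ v, π v = 1
  stationary : ∀ v, ∑ u, π u * P u v = π v

/-- `P` is lazy: every holding probability is at least `1/2`. -/
def IsLazy (P : K → K → ℝ) : Prop := ∀ u, (1 : ℝ) / 2 ≤ P u u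

/-- irreducibility: every state can reach every other state. -/
def MCIrreducible (P : K → K → ℝ) : Prop := ∀ u v : K, ∃ t : ℕ, 0 < matPow P t u v

/-- aperiodicity: the gcd of the return times of every state is `1`. -/
def MCAperiodic (P : K → K → ℝ) : Prop :=
  ∀ u : K, ∀ d : ℕ, (∀ t : ℕ, 0 < matPow P t u u → d ∣ t) → d ≤ 1

/-- reversibility: the detailed balance condition. -/
def IsReversible (P : K → K → ℝ) (π : K → ℝ) : Prop :=
  ∀ u v, π u * P u v = π v * P v u

/-- `π`-measure of a set. -/
def meas (π : K → ℝ) (A : Finset K) : ℝ := ∑ v ∈ A, π v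

/-- the time reversal `P̄(u,v) = π(v) P(v,u) / π(u)`. -/
def rev (P : K → K → ℝ) (π : K → ℝ) (u v : K) : ℝ := π v * P v u / π u

/-- transition probability from a point into a set, w.r.t. kernel `R`. -/
def setProb (R : K → K → ℝ) (v : K) (C : Finset K) : ℝ := ∑ c ∈ C, R v c

/-- the level set `A_u = {y : R(y,A) > u}`, w.r.t. kernel `R`. -/
def levelSet (R : K → K → ℝ) (A : Finset K) (u : ℝ) : Finset K :=
  Finset.univ.filter (fun y => u < setProb R y A)

/-- `g` is a fractional subset of `S` of measure `t`. -/
def IsFracSub (π : K → ℝ) (S : Finset K) (g : K → ℝ) (t : ℝ) : Prop :=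
  (∀ v, 0 ≤ g v ∧ g v ≤ 1) ∧ (∀ v ∉ S, g v = 0) ∧ ∑ v, g v * π v = t

/-- ergodic flow from a fractional subset `g` into `C`, w.r.t. kernel `R`. -/
def fracFlow (R : K → K → ℝ) (π : K → ℝ) (g : K → ℝ) (C : Finset K) : ℝ :=
  ∑ v, g v * π v * setProb R v C

/-- `Ψ(t, Aᶜ)` w.r.t. kernel `R`: for `t ≤ π(A)` the minimal flow into `Aᶜ` from a
fractional subset of `A` of measure `t`; for `t > π(A)` the minimal flow into `A`
from a fractional subset of `Aᶜ` of measure `1 − t`. -/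
def Psi (R : K → K → ℝ) (π : K → ℝ) (A : Finset K) (t : ℝ) : ℝ :=
  if t ≤ meas π A then
    sInf {q : ℝ | ∃ g : K → ℝ, IsFracSub π A g t ∧ q = fracFlow R π g Aᶜ}
  else
    sInf {q : ℝ | ∃ g : K → ℝ, IsFracSub π Aᶜ g (1 - t) ∧ q = fracFlow R π g A}

/-- `Ψ_big(t, Aᶜ)` w.r.t. kernel `R`: maximal flow into `Aᶜ` from a fractional
subset of `A` of measure `t`. -/
def PsiSup (R : K → K → ℝ) (π : K → ℝ) (A : Finset K) (t : ℝ) : ℝ :=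
  sSup {q : ℝ | ∃ g : K → ℝ, IsFracSub π A g t ∧ q = fracFlow R π g Aᶜ}

/-- the spread `ψ⁺(A)` (w.r.t. kernel `R`). -/
def psiPlus (R : K → K → ℝ) (π : K → ℝ) (A : Finset K) : ℝ :=
  (∫ t in (0:ℝ)..(meas π A), Psi R π A t) / (meas π A) ^ 2

/-- the quantity `ψ⁻(A)` (w.r.t. kernel `R`). -/
def psiMinus (R : K → K → ℝ) (π : K → ℝ) (A : Finset K) : ℝ :=
  (∫ t in (meas π A)..(1:ℝ), Psi R π A t) / (meas π A) ^ 2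

/-- the modified spread `ψ_mod(A)` (w.r.t. kernel `R`). -/
def psiMod (R : K → K → ℝ) (π : K → ℝ) (A : Finset K) : ℝ :=
  (∫ t in (0:ℝ)..(1:ℝ), Psi R π A t / min t (1 - t)) / meas π A

/-- the global spread `ψ_gl(A)` (w.r.t. kernel `R`). -/
def psiGl (R : K → K → ℝ) (π : K → ℝ) (A : Finset K) : ℝ :=
  (∫ t in (0:ℝ)..(1:ℝ), Psi R π A t) / (meas π A) ^ 2

/-- the quantity `ψ_big(A)` (w.r.t. kernel `R`). -/
def psiBig (R : K → K → ℝ) (π : K → ℝ) (A : Finset K) : ℝ :=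
  (∫ t in (0:ℝ)..(meas π A), PsiSup R π A t) / (meas π A) ^ 2

/-- the evolving-set quantity `ψ_evo(A)`, with level sets taken w.r.t. kernel `R`. -/
def psiEvo (R : K → K → ℝ) (π : K → ℝ) (A : Finset K) : ℝ :=
  1 - ∫ u in (0:ℝ)..(1:ℝ), Real.sqrt (meas π (levelSet R A u) / meas π A)

/-- ergodic flow `Q(B,C)`. -/
def ergFlow (P : K → K → ℝ) (π : K → ℝ) (B C : Finset K) : ℝ :=
  ∑ u ∈ B, ∑ v ∈ C, π u * P u v

/-- conductance `Φ(A)`. -/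
def conductance (P : K → K → ℝ) (π : K → ℝ) (A : Finset K) : ℝ :=
  ergFlow P π A Aᶜ / meas π A

def Qone (P : K → K → ℝ) (π : K → ℝ) (C D : Finset K) : ℝ :=
  ∑ v ∈ C, setProb P v D * π v

def Qtwo (P : K → K → ℝ) (π : K → ℝ) (C D : Finset K) : ℝ :=
  ∑ v ∈ C, Real.sqrt (setProb P v D) * π v

def Qinfty (P : K → K → ℝ) (π : K → ℝ) (C D : Finset K) : ℝ :=
  meas π (C.filter (fun v => 0 < setProb P v D))

/-- discrete gradient `h₁⁺(A)`. -/
def hOneP (P : K → K → ℝ) (π : K → ℝ) (A : Finset K) : ℝ :=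
  Qone P π A Aᶜ / min (meas π A) (meas π Aᶜ)

/-- discrete gradient `h₁⁻(A)`. -/
def hOneM (P : K → K → ℝ) (π : K → ℝ) (A : Finset K) : ℝ :=
  Qone P π Aᶜ A / min (meas π A) (meas π Aᶜ)

/-- discrete gradient `h₂⁺(A)`. -/
def hTwoP (P : K → K → ℝ) (π : K → ℝ) (A : Finset K) : ℝ :=
  Qtwo P π A Aᶜ / min (meas π A) (meas π Aᶜ)

/-- discrete gradient `h₂⁻(A)`. -/
def hTwoM (P : K → K → ℝ) (π : K → ℝ) (A : Finset K) : ℝ :=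
  Qtwo P π Aᶜ A / min (meas π A) (meas π Aᶜ)

/-- discrete gradient `h_∞⁺(A)`. -/
def hInfP (P : K → K → ℝ) (π : K → ℝ) (A : Finset K) : ℝ :=
  Qinfty P π A Aᶜ / min (meas π A) (meas π Aᶜ)

/-- discrete gradient `h_∞⁻(A)`. -/
def hInfM (P : K → K → ℝ) (π : K → ℝ) (A : Finset K) : ℝ :=
  Qinfty P π Aᶜ A / min (meas π A) (meas π Aᶜ)

/-- `p` is a probability distribution. -/
def IsDist (p : K → ℝ) : Prop := (∀ v, 0 ≤ p v) ∧ ∑ v, p v = 1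

/-- the distribution after `t` steps starting from `p`. -/
def stepDist (P : K → K → ℝ) (p : K → ℝ) (t : ℕ) (v : K) : ℝ :=
  ∑ u, p u * matPow P t u v

/-- total variation distance. -/
def tvDist (μ π : K → ℝ) : ℝ := (1 / 2) * ∑ v, |μ v - π v|

/-- chi-square distance. -/
def chi2Dist (μ π : K → ℝ) : ℝ := ∑ v, (μ v / π v - 1) ^ 2 * π v

/-- total variation mixing time `τ(ε)`: the max over initial distributions of the
least time at which total variation distance drops to `ε`. -/
def mixTV (P : K → K → ℝ) (π : K → ℝ) (ε : ℝ) : ℕ :=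
  sSup {n : ℕ | ∃ p : K → ℝ, IsDist p ∧
    n = sInf {t : ℕ | tvDist (stepDist P p t) π ≤ ε}}

/-- chi-square mixing time `χ²(ε)`. -/
def mixChi2 (P : K → K → ℝ) (π : K → ℝ) (ε : ℝ) : ℕ :=
  sSup {n : ℕ | ∃ p : K → ℝ, IsDist p ∧
    n = sInf {t : ℕ | chi2Dist (stepDist P p t) π ≤ ε}}

/-- `π₀ = min_v π(v)`. -/
def piMin (π : K → ℝ) : ℝ := sInf {r : ℝ | ∃ v : K, r = π v}

/-- `ψ⁺(x)`: worst spread over sets of measure at most `x`. -/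
def psiPlusSize (R : K → K → ℝ) (π : K → ℝ) (x : ℝ) : ℝ :=
  sInf {r : ℝ | ∃ A : Finset K, 0 < meas π A ∧ meas π A ≤ x ∧ r = psiPlus R π A}

/-- `ψ_evo(x)`: worst evolving-set quantity over sets of measure at most `x`. -/
def psiEvoSize (R : K → K → ℝ) (π : K → ℝ) (x : ℝ) : ℝ :=
  sInf {r : ℝ | ∃ A : Finset K, 0 < meas π A ∧ meas π A ≤ x ∧ r = psiEvo R π A}

/-- `ψ_big(x)`: worst `ψ_big` over sets of measure at most `x`. -/
def psiBigSize (R : K → K → ℝ) (π : K → ℝ) (x : ℝ) : ℝ :=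
  sInf {r : ℝ | ∃ A : Finset K, 0 < meas π A ∧ meas π A ≤ x ∧ r = psiBig R π A}

/-- Dirichlet form. -/
def dirichletForm (P : K → K → ℝ) (π : K → ℝ) (f : K → ℝ) : ℝ :=
  (1 / 2) * ∑ u, ∑ v, π u * P u v * (f u - f v) ^ 2

/-- variance w.r.t. `π`. -/
def varPi (π : K → ℝ) (f : K → ℝ) : ℝ :=
  ∑ v, π v * f v ^ 2 - (∑ v, π v * f v) ^ 2

/-- the spectral gap `λ`. -/
def specGap (P : K → K → ℝ) (π : K → ℝ) : ℝ :=
  sInf {r : ℝ | ∃ f : K → ℝ, (∃ u v, f u ≠ f v) ∧ r = dirichletForm P π f / varPi π f}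

/-- `P_* = 1 − min_{u ∈ A} P(u, A)`. -/
def Pstar (P : K → K → ℝ) (A : Finset K) : ℝ :=
  1 - sInf {r : ℝ | ∃ u ∈ A, r = setProb P u A}

/-- `P_min = min {P(u,v)/π(v) : u ∈ A, v ∈ Aᶜ, P(u,v) > 0}`. -/
def PminEdge (P : K → K → ℝ) (π : K → ℝ) (A : Finset K) : ℝ :=
  sInf {r : ℝ | ∃ u ∈ A, ∃ v ∈ Aᶜ, 0 < P u v ∧ r = P u v / π v}

/-- `w(t) = inf {y ∈ [0,1] : π(A_y) ≤ t}`. -/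
def wfun (R : K → K → ℝ) (π : K → ℝ) (A : Finset K) (t : ℝ) : ℝ :=
  sInf {y : ℝ | y ∈ Set.Icc (0:ℝ) 1 ∧ meas π (levelSet R A y) ≤ t}

/-!
A reversible chain is self-adjoint on `L²(π)`, so it has an eigenfunction `f` with `π f = 0`
whose eigenvalue `β` maximises the Rayleigh quotient `⟨h, P h⟩_π / ⟨h, h⟩_π` over mean-zero `h`.
Testing it on the centred indicator of a set `A` attaining `ψ_big(1/2)` gives
`(1 - β) π(A) π(Aᶜ) ≤ Q(A, Aᶜ) ≤ 2 π(A) ψ_big(A)`, the last step because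
`Ψ_big(t, Aᶜ) ≥ (t / π(A)) Q(A, Aᶜ)`; hence `1 - β ≤ 4 ψ_big(1/2)`.
Since `P^t f = β^t f` and `π f = 0`, the chain started where `|f|` is largest is still at total
variation distance at least `|β|^t / 2` from `π` at time `t`, so `(1 - 4 ψ_big(1/2))^τ(ε) ≤ 2ε`,
and `log (1 / (1 - x)) ≤ x / (1 - x)` turns this into the bound. A Doeblin minorisation of a
power of the lazy irreducible chain makes `τ(ε)` finite.
-/

open scoped RealInnerProductSpace

namespace LinearMap.IsSymmetric

variable {E : Type*} [NormedAddCommGroup E] [InnerProductSpace ℝ E] [FiniteDimensional ℝ E]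
  {T : E →ₗ[ℝ] E}

theorem exists_hasEigenvector_forall_inner_le [Nontrivial E] (hT : T.IsSymmetric) :
    ∃ β x, Module.End.HasEigenvector T β x ∧ ∀ y, ⟪y, T y⟫ ≤ β * ⟪y, y⟫ := by
  have hn : 0 < Module.finrank ℝ E := Module.finrank_pos
  set b := hT.eigenvectorBasis rfl
  set μ := hT.eigenvalues rfl
  refine ⟨μ ⟨0, hn⟩, b ⟨0, hn⟩, hT.hasEigenvector_eigenvectorBasis rfl _, fun y => ?_⟩
  have hTb : ∀ i, ⟪b i, T y⟫ = μ i * ⟪b i, y⟫ := fun i => by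
    rw [← hT, hT.apply_eigenvectorBasis, real_inner_smul_left]; rfl
  rw [← b.sum_inner_mul_inner y (T y), ← b.sum_inner_mul_inner y y, mul_sum]
  refine sum_le_sum fun i _ => ?_
  rw [hTb, real_inner_comm y, mul_left_comm]
  exact mul_le_mul_of_nonneg_right
    (hT.eigenvalues_antitone rfl (show (⟨0, hn⟩ : Fin _) ≤ i from Nat.zero_le _))
    (mul_self_nonneg _)

theorem exists_eigenvector_mem_forall_inner_le (hT : T.IsSymmetric) {V : Submodule ℝ E}
    (hV : ∀ x ∈ V, T x ∈ V) [Nontrivial V] :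
    ∃ β, ∃ x ∈ V, x ≠ 0 ∧ T x = β • x ∧ ∀ y ∈ V, ⟪y, T y⟫ ≤ β * ⟪y, y⟫ := by
  obtain ⟨β, x, hx, hle⟩ := (hT.restrict_invariant hV).exists_hasEigenvector_forall_inner_le
  refine ⟨β, x, x.2, fun h => hx.2 (Subtype.ext h), congrArg Subtype.val
    (Module.End.mem_eigenspace_iff.1 hx.1), fun y hy => hle ⟨y, hy⟩⟩

end LinearMap.IsSymmetric

section Symmetrization

variable {P : K → K → ℝ} {π : K → ℝ}

-- `sqrtWeight π` is an isometry from `L²(π)` onto `EuclideanSpace ℝ K` carrying `P` to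
-- `symmetrization P π`, which reversibility makes symmetric.
def sqrtWeight (π : K → ℝ) (h : K → ℝ) : EuclideanSpace ℝ K :=
  WithLp.toLp 2 fun v => √(π v) * h v

theorem inner_sqrtWeight (hπ : ∀ v, 0 ≤ π v) (h k : K → ℝ) :
    ⟪sqrtWeight π h, sqrtWeight π k⟫ = ∑ v, π v * h v * k v := by
  simp only [sqrtWeight, PiLp.inner_apply, RCLike.inner_apply, conj_trivial]
  refine sum_congr rfl fun v _ => ?_
  linear_combination (h v * k v) * Real.mul_self_sqrt (hπ v)

omit [Fintype K] in
theorem sqrtWeight_surjective (hπ : ∀ v, 0 < π v) : Function.Surjective (sqrtWeight π) :=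
  fun x => ⟨fun v => x v / √(π v), by
    ext v; simp [sqrtWeight, mul_div_cancel₀ _ (Real.sqrt_pos.2 (hπ v)).ne']⟩

omit [Fintype K] in
theorem sqrtWeight_eq_zero (hπ : ∀ v, 0 < π v) {h : K → ℝ} :
    sqrtWeight π h = 0 ↔ h = 0 := by
  simp [sqrtWeight, funext_iff, WithLp.ext_iff, (Real.sqrt_pos.2 (hπ _)).ne']

def symmetrization (P : K → K → ℝ) (π : K → ℝ) : Matrix K K ℝ :=
  Matrix.of fun u v => √(π u) * P u v / √(π v)

omit [Fintype K] in
theorem isHermitian_symmetrization (hπ : ∀ v, 0 < π v) (hrev : IsReversible P π) :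
    (symmetrization P π).IsHermitian := by
  ext u v
  have hu := Real.sqrt_pos.2 (hπ u)
  have hv := Real.sqrt_pos.2 (hπ v)
  simp only [symmetrization, Matrix.conjTranspose_apply, Matrix.of_apply, star_trivial]
  rw [div_eq_div_iff hu.ne' hv.ne']
  linear_combination -P u v * Real.mul_self_sqrt (hπ u).le + P v u * Real.mul_self_sqrt (hπ v).le
    - hrev u v

theorem toEuclideanLin_symmetrization (hπ : ∀ v, 0 < π v) (h : K → ℝ) :
    (symmetrization P π).toEuclideanLin (sqrtWeight π h) =
      sqrtWeight π fun u => ∑ v, P u v * h v := by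
  ext u
  simp only [sqrtWeight, Matrix.toLpLin_toLp, PiLp.toLp_apply, symmetrization, mul_sum]
  refine sum_congr rfl fun v _ => ?_
  simp only [Matrix.of_apply]
  field_simp [(Real.sqrt_pos.2 (hπ v)).ne']

theorem exists_mean_zero_eigenfunction_rayleigh_le [Nontrivial K] (hM : IsMarkov P π)
    (hrev : IsReversible P π) :
    ∃ (β : ℝ) (f : K → ℝ), f ≠ 0 ∧ ∑ v, π v * f v = 0 ∧ (∀ u, ∑ v, P u v * f v = β * f u) ∧
      ∀ h : K → ℝ, ∑ v, π v * h v = 0 →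
        ∑ u, π u * h u * ∑ v, P u v * h v ≤ β * ∑ v, π v * h v ^ 2 := by
  have hπ := hM.piPos
  set T := (symmetrization P π).toEuclideanLin
  have hT : T.IsSymmetric :=
    Matrix.isSymmetric_toEuclideanLin_iff.2 (isHermitian_symmetrization hπ hrev)
  have hT1 : T (sqrtWeight π 1) = sqrtWeight π 1 := by
    simp only [T, toEuclideanLin_symmetrization hπ, Pi.one_apply, mul_one, hM.rowSum]
    rfl
  set V := (ℝ ∙ sqrtWeight π 1)ᗮ
  have hmemV : ∀ h, sqrtWeight π h ∈ V ↔ ∑ v, π v * h v = 0 := fun h => by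
    simp [V, Submodule.mem_orthogonal_singleton_iff_inner_right,
      inner_sqrtWeight fun v => (hπ v).le]
  have hV : ∀ x ∈ V, T x ∈ V := fun x hx => by
    rw [Submodule.mem_orthogonal_singleton_iff_inner_right] at hx ⊢
    rw [← hT, hT1, hx]
  have : Nontrivial V := by
    apply Module.nontrivial_of_finrank_pos (R := ℝ)
    have h := Submodule.finrank_add_finrank_orthogonal (ℝ ∙ sqrtWeight π 1)
    rw [finrank_span_singleton ((sqrtWeight_eq_zero hπ).not.2 one_ne_zero),
      finrank_euclideanSpace] at h
    change 1 + Module.finrank ℝ V = _ at h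
    have := Fintype.one_lt_card (α := K)
    omega
  obtain ⟨β, x, hxV, hx0, hTx, hle⟩ := hT.exists_eigenvector_mem_forall_inner_le hV
  obtain ⟨f, rfl⟩ := sqrtWeight_surjective hπ x
  refine ⟨β, f, fun h => hx0 ((sqrtWeight_eq_zero hπ).2 h), (hmemV f).1 hxV,
    fun u => ?_, fun h hh => ?_⟩
  · have := congrArg (· u) hTx
    simp only [T, toEuclideanLin_symmetrization hπ] at this
    simp only [sqrtWeight, PiLp.smul_apply, PiLp.toLp_apply, smul_eq_mul] at this
    exact mul_left_cancel₀ (Real.sqrt_pos.2 (hπ u)).ne' (by linear_combination this)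
  · have := hle _ ((hmemV h).2 hh)
    simp only [T, toEuclideanLin_symmetrization hπ, inner_sqrtWeight fun v => (hπ v).le] at this
    simpa only [sq, mul_assoc] using this

end Symmetrization

section MatrixPowers

variable {P : K → K → ℝ} {π : K → ℝ}

theorem matPow_eq_pow (P : K → K → ℝ) (t : ℕ) : matPow P t = Matrix.of P ^ t := by
  induction t with
  | zero => ext u v; simp [matPow, Matrix.one_apply]
  | succ t ih => ext u v; simp [matPow, pow_succ, Matrix.mul_apply, ih]

theorem matPow_add (P : K → K → ℝ) (s t : ℕ) (u v : K) :
    matPow P (s + t) u v = ∑ w, matPow P s u w * matPow P t w v := by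
  simp [matPow_eq_pow, pow_add, Matrix.mul_apply]

theorem matPow_nonneg (hP : ∀ u v, 0 ≤ P u v) : ∀ t u v, 0 ≤ matPow P t u v
  | 0, u, v => by simp only [matPow]; split_ifs <;> norm_num
  | t + 1, u, v => sum_nonneg fun w _ => mul_nonneg (matPow_nonneg hP t u w) (hP w v)

theorem matPow_self_pos (hP : ∀ u v, 0 ≤ P u v) (hd : ∀ u, 0 < P u u) :
    ∀ t u, 0 < matPow P t u u
  | 0, u => by simp [matPow]
  | t + 1, u => (mul_pos (matPow_self_pos hP hd t u) (hd u)).trans_le <|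
      single_le_sum (f := fun w => matPow P t u w * P w u)
        (fun w _ => mul_nonneg (matPow_nonneg hP t u w) (hP w u)) (mem_univ u)

theorem sum_matPow_mul_of_eigen {β : ℝ} {f : K → ℝ} (hf : ∀ u, ∑ v, P u v * f v = β * f u)
    (t : ℕ) (u : K) : ∑ v, matPow P t u v * f v = β ^ t * f u := by
  have hf' : Matrix.mulVec (Matrix.of P) f = β • f := funext hf
  have : Matrix.mulVec (Matrix.of P ^ t) f = β ^ t • f := by
    induction t with
    | zero => simp
    | succ t ih => rw [pow_succ, ← Matrix.mulVec_mulVec, hf', Matrix.mulVec_smul, ih, smul_smul,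
        pow_succ, mul_comm]
  simpa [matPow_eq_pow, Matrix.mulVec, dotProduct] using congrFun this u

theorem sum_matPow (hP : ∀ u, ∑ v, P u v = 1) (t : ℕ) (u : K) : ∑ v, matPow P t u v = 1 := by
  simpa using sum_matPow_mul_of_eigen (f := 1) (β := 1) (by simpa using hP) t u

theorem sum_mul_matPow (hπ : ∀ v, ∑ u, π u * P u v = π v) (t : ℕ) (v : K) :
    ∑ u, π u * matPow P t u v = π v := by
  have hπ' : Matrix.vecMul π (Matrix.of P) = π := funext hπ
  have : Matrix.vecMul π (Matrix.of P ^ t) = π := by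
    induction t with
    | zero => simp
    | succ t ih => rw [pow_succ, ← Matrix.vecMul_vecMul, ih, hπ']
  simpa [matPow_eq_pow, Matrix.vecMul, dotProduct] using congrFun this v

theorem exists_forall_matPow_pos (hP : ∀ u v, 0 ≤ P u v) (hd : ∀ u, 0 < P u u)
    (hirr : MCIrreducible P) : ∃ t, ∀ u v, 0 < matPow P t u v := by
  choose s hs using hirr
  refine ⟨univ.sup fun q : K × K => s q.1 q.2, fun u v => ?_⟩
  obtain ⟨r, hr⟩ := Nat.exists_eq_add_of_le
    (le_sup (f := fun q : K × K => s q.1 q.2) (mem_univ (u, v)))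
  rw [hr, matPow_add]
  exact (mul_pos (hs u v) (matPow_self_pos hP hd r v)).trans_le <|
    single_le_sum (f := fun w => matPow P (s u v) u w * matPow P r w v)
      (fun w _ => mul_nonneg (matPow_nonneg hP _ u w) (matPow_nonneg hP r w v)) (mem_univ v)

end MatrixPowers

section Convergence

variable {P : K → K → ℝ} {π : K → ℝ}

theorem exists_pos_forall_mul_le {ι : Type*} [Finite ι] (a : ι → ℝ) {b : ι → ℝ}
    (hb : ∀ i, 0 < b i) : ∃ δ > 0, ∀ i, δ * a i ≤ b i := by
  have h : ∀ᶠ δ in nhdsWithin (0 : ℝ) (Set.Ioi 0), ∀ i, δ * a i ≤ b i :=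
    Filter.eventually_all.2 fun i => nhdsWithin_le_nhds <| by
      have := (continuous_mul_const (a i)).tendsto 0
      rw [zero_mul] at this
      exact this.eventually (eventually_le_nhds (hb i))
  obtain ⟨δ, hδ, hδ0⟩ := (h.and self_mem_nhdsWithin).exists
  exact ⟨δ, hδ0, hδ⟩

theorem sum_stepDist (hP : ∀ u, ∑ v, P u v = 1) (p : K → ℝ) (t : ℕ) :
    ∑ v, stepDist P p t v = ∑ u, p u := by
  simp only [stepDist]
  rw [sum_comm]
  simp [← mul_sum, sum_matPow hP]

theorem stepDist_add (P : K → K → ℝ) (p : K → ℝ) (s t : ℕ) :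
    stepDist P p (s + t) = stepDist P (stepDist P p s) t := by
  ext v
  simp only [stepDist, matPow_add, mul_sum, sum_mul, mul_assoc]
  exact sum_comm

theorem tvDist_le_one {p : K → ℝ} (hp : IsDist p) (hπ : IsDist π) : tvDist p π ≤ 1 := by
  have : ∑ v, |p v - π v| ≤ ∑ v, (p v + π v) := sum_le_sum fun v _ =>
    (abs_sub _ _).trans_eq (by rw [abs_of_nonneg (hp.1 v), abs_of_nonneg (hπ.1 v)])
  rw [sum_add_distrib, hp.2, hπ.2] at this
  unfold tvDist
  linarith

theorem tvDist_sum_mul_le {M : K → K → ℝ} {p : K → ℝ} {δ : ℝ}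
    (hmin : ∀ u v, δ * π v ≤ M u v) (hrow : ∀ u, ∑ v, M u v = 1)
    (hstat : ∀ v, ∑ u, π u * M u v = π v) (hπ : ∑ v, π v = 1) (hp : ∑ v, p v = 1) :
    tvDist (fun v => ∑ u, p u * M u v) π ≤ (1 - δ) * tvDist p π := by
  -- subtracting `δ π` costs nothing because `p - π` has total mass zero
  have hdiff : ∀ v, ∑ u, p u * M u v - π v = ∑ u, (p u - π u) * (M u v - δ * π v) := by
    intro v
    simp only [sub_mul, mul_sub, sum_sub_distrib, ← sum_mul, hp, hπ, hstat v]
    ring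
  have key : ∑ v, |∑ u, p u * M u v - π v| ≤ (1 - δ) * ∑ u, |p u - π u| :=
    calc ∑ v, |∑ u, p u * M u v - π v|
        ≤ ∑ v, ∑ u, |p u - π u| * (M u v - δ * π v) := sum_le_sum fun v _ => by
          rw [hdiff]
          refine (abs_sum_le_sum_abs _ _).trans_eq (sum_congr rfl fun u _ => ?_)
          rw [abs_mul, abs_of_nonneg (sub_nonneg.2 (hmin u v))]
      _ = ∑ u, |p u - π u| * (1 - δ) := by
          rw [sum_comm]
          refine sum_congr rfl fun u _ => ?_
          rw [← mul_sum, sum_sub_distrib, ← mul_sum, hrow, hπ, mul_one]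
      _ = (1 - δ) * ∑ u, |p u - π u| := by rw [← sum_mul, mul_comm]
  unfold tvDist
  linarith

theorem exists_minorization (hM : IsMarkov P π) (hd : ∀ u, 0 < P u u)
    (hirr : MCIrreducible P) : ∃ t δ, 0 < δ ∧ δ ≤ 1 ∧ ∀ u v, δ * π v ≤ matPow P t u v := by
  obtain ⟨t, ht⟩ := exists_forall_matPow_pos hM.nonneg hd hirr
  obtain ⟨δ, hδ, hmin⟩ := exists_pos_forall_mul_le (fun q : K × K => π q.2)
    (fun q => ht q.1 q.2)
  obtain ⟨u, -⟩ : (univ : Finset K).Nonempty :=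
    nonempty_of_sum_ne_zero (by rw [hM.piSum]; exact one_ne_zero)
  refine ⟨t, δ, hδ, ?_, fun u v => hmin (u, v)⟩
  calc δ = ∑ v, δ * π v := by rw [← mul_sum, hM.piSum, mul_one]
    _ ≤ ∑ v, matPow P t u v := sum_le_sum fun v _ => hmin (u, v)
    _ = 1 := sum_matPow hM.rowSum t u

theorem exists_forall_tvDist_stepDist_le (hM : IsMarkov P π) (hd : ∀ u, 0 < P u u)
    (hirr : MCIrreducible P) {ε : ℝ} (hε : 0 < ε) :
    ∃ T, ∀ p, IsDist p → tvDist (stepDist P p T) π ≤ ε := by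
  obtain ⟨t, δ, hδ0, hδ1, hmin⟩ := exists_minorization hM hd hirr
  obtain ⟨k, hk⟩ := exists_pow_lt_of_lt_one hε (by linarith : 1 - δ < 1)
  refine ⟨k * t, fun p hp => ?_⟩
  have geometric : ∀ j : ℕ, tvDist (stepDist P p (j * t)) π ≤ (1 - δ) ^ j := by
    intro j
    induction j with
    | zero =>
      have : stepDist P p 0 = p := by ext v; simp [stepDist, matPow]
      simpa [this] using tvDist_le_one hp ⟨fun v => (hM.piPos v).le, hM.piSum⟩
    | succ j ih =>
      rw [add_one_mul, stepDist_add, pow_succ']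
      refine (tvDist_sum_mul_le hmin (sum_matPow hM.rowSum t) (sum_mul_matPow hM.stationary t)
        hM.piSum ((sum_stepDist hM.rowSum p _).trans hp.2)).trans ?_
      exact mul_le_mul_of_nonneg_left ih (by linarith)
  exact (geometric k).trans hk.le

end Convergence

section MixingTime

variable {P : K → K → ℝ} {π : K → ℝ}

theorem isDist_single (x : K) : IsDist (Pi.single x 1 : K → ℝ) :=
  ⟨fun v => by by_cases h : v = x <;> simp [h], by simp⟩

theorem stepDist_single (P : K → K → ℝ) (x : K) (t : ℕ) :
    stepDist P (Pi.single x 1) t = matPow P t x := by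
  ext v
  simp [stepDist, Pi.single_apply]

theorem le_mixTV {ε : ℝ} {T : ℕ} (hT : ∀ p, IsDist p → tvDist (stepDist P p T) π ≤ ε)
    {p : K → ℝ} (hp : IsDist p) :
    sInf {t | tvDist (stepDist P p t) π ≤ ε} ≤ mixTV P π ε :=
  le_csSup ⟨T, by rintro _ ⟨q, hq, rfl⟩; exact Nat.sInf_le (hT q hq)⟩ ⟨p, hp, rfl⟩

theorem pow_abs_le_two_mul_tvDist {β : ℝ} {f : K → ℝ} {x : K}
    (hmean : ∑ v, π v * f v = 0) (heig : ∀ u, ∑ v, P u v * f v = β * f u)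
    (hx : ∀ v, |f v| ≤ |f x|) (hfx : f x ≠ 0) (t : ℕ) :
    |β| ^ t ≤ 2 * tvDist (matPow P t x) π := by
  have hsum : β ^ t * f x = ∑ v, (matPow P t x v - π v) * f v := by
    simp only [sub_mul, sum_sub_distrib, sum_matPow_mul_of_eigen heig, hmean, sub_zero]
  have : |β| ^ t * |f x| ≤ (∑ v, |matPow P t x v - π v|) * |f x| := by
    rw [← abs_pow, ← abs_mul, hsum, sum_mul]
    refine (abs_sum_le_sum_abs _ _).trans (sum_le_sum fun v _ => ?_)
    rw [abs_mul]
    exact mul_le_mul_of_nonneg_left (hx v) (abs_nonneg _)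
  unfold tvDist
  linarith [le_of_mul_le_mul_right this (abs_pos.2 hfx)]

theorem exists_le_mixTV_pow_abs_le (hM : IsMarkov P π) (hd : ∀ u, 0 < P u u)
    (hirr : MCIrreducible P) {β : ℝ} {f : K → ℝ} (hf : f ≠ 0)
    (hmean : ∑ v, π v * f v = 0) (heig : ∀ u, ∑ v, P u v * f v = β * f u)
    {ε : ℝ} (hε : 0 < ε) : ∃ n : ℕ, n ≤ mixTV P π ε ∧ |β| ^ n ≤ 2 * ε := by
  obtain ⟨T, hT⟩ := exists_forall_tvDist_stepDist_le hM hd hirr hε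
  obtain ⟨y, hy⟩ := Function.ne_iff.1 hf
  have : Nonempty K := ⟨y⟩
  obtain ⟨x, hx⟩ := Finite.exists_max fun v => |f v|
  have hfx : f x ≠ 0 := abs_pos.1 ((abs_pos.2 hy).trans_le (hx y))
  set S := {t | tvDist (stepDist P (Pi.single x 1) t) π ≤ ε}
  have hS : sInf S ∈ S := Nat.sInf_mem ⟨T, hT _ (isDist_single x)⟩
  refine ⟨sInf S, le_mixTV hT (isDist_single x), ?_⟩
  have := pow_abs_le_two_mul_tvDist hmean heig hx hfx (sInf S)
  rw [← stepDist_single] at this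
  linarith [show tvDist _ π ≤ ε from hS]

end MixingTime

section FractionalSubsets

variable {R : K → K → ℝ} {π : K → ℝ} {S A C : Finset K} {g h : K → ℝ} {s t t' : ℝ}

theorem isFracSub_zero (π : K → ℝ) (S : Finset K) : IsFracSub π S 0 0 :=
  ⟨fun _ => by simp, fun _ _ => rfl, by simp⟩

theorem isFracSub_indicator (π : K → ℝ) (A : Finset K) :
    IsFracSub π A ((A : Set K).indicator 1) (meas π A) := by
  refine ⟨fun v => ?_, fun v hv => by simp [hv], ?_⟩
  · by_cases hv : v ∈ A <;> simp [hv]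
  · simp [Set.indicator_apply, meas]

theorem IsFracSub.convexComb (hg : IsFracSub π S g t) (hh : IsFracSub π S h t')
    (hs0 : 0 ≤ s) (hs1 : s ≤ 1) :
    IsFracSub π S (fun v => (1 - s) * g v + s * h v) ((1 - s) * t + s * t') := by
  refine ⟨fun v => ⟨?_, ?_⟩, fun v hv => by simp [hg.2.1 v hv, hh.2.1 v hv], ?_⟩
  · nlinarith [(hg.1 v).1, (hh.1 v).1]
  · nlinarith [(hg.1 v).2, (hh.1 v).2]
  · simp only [add_mul, mul_assoc, sum_add_distrib, ← mul_sum, hg.2.2, hh.2.2]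

theorem IsFracSub.le_indicator (hg : IsFracSub π A g t) (v : K) :
    g v ≤ (A : Set K).indicator 1 v := by
  by_cases hv : v ∈ A
  · simpa [hv] using (hg.1 v).2
  · simp [hv, hg.2.1 v hv]

theorem fracFlow_indicator (R : K → K → ℝ) (π : K → ℝ) (A C : Finset K) :
    fracFlow R π ((A : Set K).indicator 1) C = ergFlow R π A C := by
  simp [fracFlow, ergFlow, setProb, Set.indicator_apply, mul_sum]

theorem fracFlow_mono (hR : ∀ u v, 0 ≤ R u v) (hπ : ∀ v, 0 ≤ π v) (hgh : ∀ v, g v ≤ h v) :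
    fracFlow R π g C ≤ fracFlow R π h C :=
  sum_le_sum fun v _ => mul_le_mul_of_nonneg_right
    (mul_le_mul_of_nonneg_right (hgh v) (hπ v)) (sum_nonneg fun c _ => hR v c)

theorem bddAbove_fracFlow (hR : ∀ u v, 0 ≤ R u v) (hπ : ∀ v, 0 ≤ π v) :
    BddAbove {q | ∃ g, IsFracSub π A g t ∧ q = fracFlow R π g Aᶜ} := by
  refine ⟨ergFlow R π A Aᶜ, ?_⟩
  rintro _ ⟨g, hg, rfl⟩
  rw [← fracFlow_indicator]
  exact fracFlow_mono hR hπ hg.le_indicator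

theorem isFracSub_smul_indicator (π : K → ℝ) (A : Finset K) (hs0 : 0 ≤ s) (hs1 : s ≤ 1) :
    IsFracSub π A (s • (A : Set K).indicator 1) (s * meas π A) := by
  have h := (isFracSub_zero π A).convexComb (isFracSub_indicator π A) hs0 hs1
  simp only [Pi.zero_apply, mul_zero, zero_add] at h
  exact h

theorem fracFlow_smul (R : K → K → ℝ) (π : K → ℝ) (g : K → ℝ) (s : ℝ) (C : Finset K) :
    fracFlow R π (s • g) C = s * fracFlow R π g C := by
  simp only [fracFlow, Pi.smul_apply, smul_eq_mul, mul_sum, mul_assoc]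

theorem mul_ergFlow_le_PsiSup (hR : ∀ u v, 0 ≤ R u v) (hπ : ∀ v, 0 ≤ π v)
    (hs0 : 0 ≤ s) (hs1 : s ≤ 1) :
    s * ergFlow R π A Aᶜ ≤ PsiSup R π A (s * meas π A) :=
  le_csSup (bddAbove_fracFlow hR hπ) ⟨_, isFracSub_smul_indicator π A hs0 hs1, by
    rw [fracFlow_smul, fracFlow_indicator]⟩

/-- Moving a fractional subset of `A` towards `A` itself raises both its measure and its flow. -/
theorem monotoneOn_PsiSup (hR : ∀ u v, 0 ≤ R u v) (hπ : ∀ v, 0 ≤ π v) :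
    MonotoneOn (PsiSup R π A) (Set.Icc 0 (meas π A)) := by
  rintro t ⟨ht0, -⟩ t' ⟨-, ht'⟩ htt'
  rcases htt'.eq_or_lt with rfl | hlt
  · rfl
  have hm : 0 < meas π A - t := by linarith
  set s := (t' - t) / (meas π A - t)
  have hs0 : 0 ≤ s := div_nonneg (by linarith) hm.le
  have hs1 : s ≤ 1 := (div_le_one hm).2 (by linarith)
  have hmeas : (1 - s) * t + s * meas π A = t' := by
    simp only [s]
    field_simp
    ring
  have hne : {q | ∃ g, IsFracSub π A g t ∧ q = fracFlow R π g Aᶜ}.Nonempty := by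
    have hm0 : 0 < meas π A := by linarith
    refine ⟨_, (t / meas π A) • (A : Set K).indicator 1, ?_, rfl⟩
    convert isFracSub_smul_indicator π A (div_nonneg ht0 hm0.le)
      ((div_le_one hm0).2 (by linarith)) using 1
    field_simp
  refine csSup_le hne ?_
  rintro _ ⟨g, hg, rfl⟩
  have hg' := hmeas ▸ hg.convexComb (isFracSub_indicator π A) hs0 hs1
  refine (fracFlow_mono hR hπ fun v => ?_).trans (le_csSup (bddAbove_fracFlow hR hπ) ⟨_, hg', rfl⟩)
  nlinarith [hg.le_indicator v]

theorem ergFlow_le_two_mul_meas_mul_psiBig (hR : ∀ u v, 0 ≤ R u v) (hπ : ∀ v, 0 ≤ π v)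
    (hA : 0 < meas π A) : ergFlow R π A Aᶜ ≤ 2 * meas π A * psiBig R π A := by
  set m := meas π A
  set Q := ergFlow R π A Aᶜ
  have hint : Q * m / 2 ≤ ∫ t in (0 : ℝ)..m, PsiSup R π A t := by
    calc Q * m / 2 = ∫ t in (0 : ℝ)..m, t / m * Q := by
          simp only [div_mul_eq_mul_div, intervalIntegral.integral_div,
            intervalIntegral.integral_mul_const, integral_id]
          field_simp
          ring
      _ ≤ ∫ t in (0 : ℝ)..m, PsiSup R π A t := by
          have hmono : MonotoneOn (PsiSup R π A) (Set.uIcc 0 m) := by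
            rw [Set.uIcc_of_le hA.le]
            exact monotoneOn_PsiSup hR hπ
          refine intervalIntegral.integral_mono_on hA.le
            (Continuous.intervalIntegrable (by fun_prop) _ _) hmono.intervalIntegrable
            fun t ht => ?_
          have := mul_ergFlow_le_PsiSup (A := A) hR hπ (div_nonneg ht.1 hA.le)
            ((div_le_one hA).2 ht.2)
          rwa [div_mul_cancel₀ t hA.ne'] at this
  show Q ≤ 2 * m * ((∫ t in (0 : ℝ)..m, PsiSup R π A t) / m ^ 2)
  rw [mul_div_assoc', le_div_iff₀ (by positivity)]
  nlinarith

end FractionalSubsets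

section SpectralGap

variable {P : K → K → ℝ} {π : K → ℝ}

theorem sum_mul_setProb (hM : IsMarkov P π) (A : Finset K) :
    ∑ u, π u * setProb P u A = meas π A := by
  simp only [setProb, mul_sum]
  rw [sum_comm]
  exact sum_congr rfl fun v _ => hM.stationary v

omit [Fintype K] in
theorem ergFlow_eq_sum_mul_setProb (P : K → K → ℝ) (π : K → ℝ) (A C : Finset K) :
    ergFlow P π A C = ∑ u ∈ A, π u * setProb P u C := by
  simp only [ergFlow, setProb, mul_sum]

theorem ergFlow_add_ergFlow_compl (hM : IsMarkov P π) (A : Finset K) :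
    ergFlow P π A A + ergFlow P π A Aᶜ = meas π A := by
  simp only [ergFlow_eq_sum_mul_setProb, ← sum_add_distrib, ← mul_add, setProb,
    sum_add_sum_compl, hM.rowSum, mul_one, meas]

theorem one_sub_mul_le_ergFlow (hM : IsMarkov P π) {β : ℝ}
    (hβ : ∀ h : K → ℝ, ∑ v, π v * h v = 0 →
      ∑ u, π u * h u * ∑ v, P u v * h v ≤ β * ∑ v, π v * h v ^ 2) (A : Finset K) :
    (1 - β) * (meas π A * (1 - meas π A)) ≤ ergFlow P π A Aᶜ := by
  set a := meas π A
  set h : K → ℝ := fun v => (A : Set K).indicator 1 v - a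
  have hind : ∑ v, π v * (A : Set K).indicator 1 v = a := by
    simp [Set.indicator_apply, a, meas]
  have hmean : ∑ v, π v * h v = 0 := by
    simp only [h, mul_sub, sum_sub_distrib, hind, ← sum_mul, hM.piSum, one_mul, sub_self]
  have hPh : ∀ u, ∑ v, P u v * h v = setProb P u A - a := fun u => by
    simp [h, mul_sub, sum_sub_distrib, ← sum_mul, hM.rowSum, Set.indicator_apply, setProb]
  have hflow : ∑ u, π u * (A : Set K).indicator 1 u * setProb P u A = ergFlow P π A A := by
    simp [Set.indicator_apply, ergFlow_eq_sum_mul_setProb]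
  have hform : ∑ u, π u * h u * ∑ v, P u v * h v = ergFlow P π A A - a ^ 2 := by
    calc ∑ u, π u * h u * ∑ v, P u v * h v
        = ∑ u, (π u * (A : Set K).indicator 1 u * setProb P u A - a * (π u * setProb P u A)
            - a * (π u * (A : Set K).indicator 1 u) + a ^ 2 * π u) :=
          sum_congr rfl fun u _ => by rw [hPh]; ring
      _ = ergFlow P π A A - a ^ 2 := by
          simp only [sum_add_distrib, sum_sub_distrib, ← mul_sum, hflow, sum_mul_setProb hM,
            hind, hM.piSum]
          ring
  have hnorm : ∑ v, π v * h v ^ 2 = a * (1 - a) := by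
    calc ∑ v, π v * h v ^ 2
        = ∑ v, ((1 - 2 * a) * (π v * (A : Set K).indicator 1 v) + a ^ 2 * π v) :=
          sum_congr rfl fun v _ => by
            by_cases hv : v ∈ A <;> simp [h, hv] <;> ring
      _ = a * (1 - a) := by
          simp only [sum_add_distrib, ← mul_sum, hind, hM.piSum]
          ring
  have := hβ h hmean
  rw [hform, hnorm] at this
  linarith [ergFlow_add_ergFlow_compl hM A]

end SpectralGap

theorem one_sub_le_four_mul_psiBig {P : K → K → ℝ} {π : K → ℝ} (hM : IsMarkov P π) {β : ℝ}
    (hβ : ∀ h : K → ℝ, ∑ v, π v * h v = 0 →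
      ∑ u, π u * h u * ∑ v, P u v * h v ≤ β * ∑ v, π v * h v ^ 2)
    {A : Finset K} (hA0 : 0 < meas π A) (hA : meas π A ≤ 1 / 2) :
    1 - β ≤ 4 * psiBig P π A := by
  have hgap := one_sub_mul_le_ergFlow hM hβ A
  have hpsi := ergFlow_le_two_mul_meas_mul_psiBig hM.nonneg (fun v => (hM.piPos v).le) hA0
  have hQ : 0 ≤ ergFlow P π A Aᶜ :=
    sum_nonneg fun u _ => sum_nonneg fun v _ => mul_nonneg (hM.piPos u).le (hM.nonneg u v)
  rcases le_or_gt (1 - β) 0 with hβ1 | hβ1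
  · nlinarith
  · nlinarith [mul_pos hβ1 hA0]

theorem nontrivial_of_meas_pos_of_meas_lt_one {π : K → ℝ} (hπ : ∑ v, π v = 1) {A : Finset K}
    (h0 : 0 < meas π A) (h1 : meas π A < 1) : Nontrivial K := by
  obtain ⟨u, hu⟩ : A.Nonempty := nonempty_of_sum_ne_zero h0.ne'
  obtain ⟨v, hv⟩ : ∃ v, v ∉ A := by
    by_contra! h
    exact h1.ne (by rw [meas, eq_univ_iff_forall.2 h, hπ])
  exact nontrivial_of_ne u v fun h => hv (h ▸ hu)

theorem psiBigSize_eq_zero_or_exists (R : K → K → ℝ) (π : K → ℝ) (x : ℝ) :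
    psiBigSize R π x = 0 ∨
      ∃ A, 0 < meas π A ∧ meas π A ≤ x ∧ psiBigSize R π x = psiBig R π A := by
  set S := {r | ∃ A : Finset K, 0 < meas π A ∧ meas π A ≤ x ∧ r = psiBig R π A}
  rcases S.eq_empty_or_nonempty with hS | hS
  · left
    change sInf S = 0
    rw [hS, Real.sInf_empty]
  · right
    have hfin : S.Finite := (Set.finite_range (psiBig R π)).subset <| by
      rintro _ ⟨A, -, -, rfl⟩
      exact ⟨A, rfl⟩
    exact hS.csInf_mem hfin

theorem log_inv_mul_le_of_pow_le {c δ : ℝ} {n : ℕ} (hc : 0 < c) (h : c ^ n ≤ δ) :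
    Real.log (1 / δ) * c ≤ n * (1 - c) := by
  have hlog : n * Real.log c ≤ Real.log δ := by
    rw [← Real.log_pow]
    exact Real.log_le_log (by positivity) h
  have hinv : -Real.log c ≤ 1 / c - 1 := by
    simpa [Real.log_inv] using Real.log_le_sub_one_of_pos (inv_pos.2 hc)
  have : Real.log (1 / δ) ≤ n * (1 / c - 1) := by
    rw [one_div, Real.log_inv]
    nlinarith [(n.cast_nonneg : (0 : ℝ) ≤ n)]
  calc Real.log (1 / δ) * c ≤ n * (1 / c - 1) * c := mul_le_mul_of_nonneg_right this hc.le
    _ = n * (1 - c) := by field_simp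

theorem mixing_time_lower_bound_psiBig_general
    (P : K → K → ℝ) (π : K → ℝ)
    (hM : IsMarkov P π) (hlazy : IsLazy P)
    (hirr : MCIrreducible P)
    (hrev : IsReversible P π)
    (ε : ℝ) (hε0 : 0 < ε) (hε : ε < 1 / 2) :
    (mixTV P π ε : ℝ) ≥
      ((1 - 4 * psiBigSize P π (1 / 2)) / (8 * psiBigSize P π (1 / 2))) *
        Real.log (1 / (2 * ε)) := by
  set ψ := psiBigSize P π (1 / 2)
  obtain hψ | ⟨A, hA0, hA, hψA⟩ := psiBigSize_eq_zero_or_exists P π (1 / 2)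
  · simp [ψ, hψ]
  have hL : 0 < Real.log (1 / (2 * ε)) :=
    Real.log_pos (by rw [lt_div_iff₀ (by positivity)]; linarith)
  rcases le_or_gt (1 - 4 * ψ) 0 with hc | hc
  · exact (mul_nonpos_of_nonpos_of_nonneg (div_nonpos_of_nonpos_of_nonneg hc (by linarith))
      hL.le).trans (Nat.cast_nonneg _)
  have := nontrivial_of_meas_pos_of_meas_lt_one hM.piSum hA0 (by linarith)
  obtain ⟨β, f, hf, hmean, heig, hβ⟩ := exists_mean_zero_eigenfunction_rayleigh_le hM hrev
  have hgap : 1 - β ≤ 4 * ψ := by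
    simpa only [ψ, hψA] using one_sub_le_four_mul_psiBig hM hβ hA0 hA
  have hd : ∀ u, 0 < P u u := fun u => by linarith [hlazy u]
  obtain ⟨n, hn, hβn⟩ := exists_le_mixTV_pow_abs_le hM hd hirr hf hmean heig hε0
  have hpow : (1 - 4 * ψ) ^ n ≤ 2 * ε :=
    (pow_le_pow_left₀ hc.le ((by linarith : 1 - 4 * ψ ≤ β).trans (le_abs_self β)) n).trans hβn
  have key := log_inv_mul_le_of_pow_le hc hpow
  have hψ0 : 0 < ψ := by nlinarith [(n.cast_nonneg : (0 : ℝ) ≤ n)]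
  rw [ge_iff_le, div_mul_eq_mul_div, div_le_iff₀ (by positivity)]
  nlinarith [mul_le_mul_of_nonneg_right (Nat.cast_le.2 hn : (n : ℝ) ≤ mixTV P π ε) hψ0.le,
    (n.cast_nonneg : (0 : ℝ) ≤ n)]

/-- lower bound on the total variation mixing time via `ψ_big(1/2)`. -/
theorem mixing_time_lower_bound_psiBig
    (P : K → K → ℝ) (π : K → ℝ)
    (hM : IsMarkov P π) (hlazy : IsLazy P)
    (hirr : MCIrreducible P) (hap : MCAperiodic P)
    (hrev : IsReversible P π)
    (ε : ℝ) (hε0 : 0 < ε) (hε : ε < 1 / 2) :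
    (mixTV P π ε : ℝ) ≥
      ((1 - 4 * psiBigSize P π (1 / 2)) / (8 * psiBigSize P π (1 / 2))) *
        Real.log (1 / (2 * ε)) :=
  mixing_time_lower_bound_psiBig_general P π hM hlazy hirr hrev ε hε0 hε
end
end

section
/- Let P be a lazy, irreducible, aperiodic Markov chain (possibly non-reversible) on a finite state space K with stationary distribution π, and let A ⊆ K with 0 < π(A) ≤ 1/2. Then ψ⁺(A) ≤ (1/2)·h₂⁺(A)² and ψ⁻(A) ≤ (1/2)·h₂⁻(A)². -/
open Finset MeasureTheory

noncomputable section

attribute [local instance] Classical.propDecidable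

variable {K : Type*} [Fintype K]

/-! Order the states `v` of `B` by their escape probability `q v = P(v, Bᶜ)`. Filling `B` in
that order shows that `Ψ(·, Bᶜ)` lies below a convex piecewise-linear function with slope `q v`
on the piece of length `π v` belonging to `v`. Integrating, adding the state `v` with the largest
`q` costs `π v · Σ_{w before v} q w π w + q v π v² / 2`, and `q w ≤ √(q w) √(q v)` turns this into
the increment of `½ (Σ √(q v) π v)²`. On `t > π(A)` the same bound applies to `Aᶜ` after the
substitution `t ↦ 1 - t`. -/

/-- `Ψ(t, Bᶜ)` for `0 ≤ t ≤ π(B)`. -/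
def minFlow (P : K → K → ℝ) (π : K → ℝ) (B : Finset K) (t : ℝ) : ℝ :=
  sInf {q : ℝ | ∃ g : K → ℝ, IsFracSub π B g t ∧ q = fracFlow P π g Bᶜ}

variable {P : K → K → ℝ} {π : K → ℝ}

lemma Psi_of_le {A : Finset K} {t : ℝ} (ht : t ≤ meas π A) :
    Psi P π A t = minFlow P π A t := by
  rw [Psi, if_pos ht, minFlow]

lemma Psi_of_lt {A : Finset K} {t : ℝ} (ht : meas π A < t) :
    Psi P π A t = minFlow P π Aᶜ (1 - t) := by
  rw [Psi, if_neg ht.not_ge, minFlow, compl_compl]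

omit [Fintype K] in
lemma meas_nonneg (hπ : ∀ v, 0 ≤ π v) (B : Finset K) : 0 ≤ meas π B :=
  Finset.sum_nonneg fun v _ => hπ v

omit [Fintype K] in
lemma meas_mono (hπ : ∀ v, 0 ≤ π v) {S B : Finset K} (h : S ⊆ B) : meas π S ≤ meas π B :=
  Finset.sum_le_sum_of_subset_of_nonneg h fun v _ _ => hπ v

omit [Fintype K] in
lemma setProb_nonneg (hP : ∀ u v, 0 ≤ P u v) (v : K) (C : Finset K) : 0 ≤ setProb P v C :=
  Finset.sum_nonneg fun c _ => hP v c

lemma fracFlow_nonneg (hP : ∀ u v, 0 ≤ P u v) (hπ : ∀ v, 0 ≤ π v) {g : K → ℝ}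
    (hg : ∀ v, 0 ≤ g v) (C : Finset K) : 0 ≤ fracFlow P π g C :=
  Finset.sum_nonneg fun v _ => mul_nonneg (mul_nonneg (hg v) (hπ v)) (setProb_nonneg hP v C)

lemma fracFlow_const_mul (c : ℝ) (g : K → ℝ) (C : Finset K) :
    fracFlow P π (fun v => c * g v) C = c * fracFlow P π g C := by
  simp only [fracFlow, Finset.mul_sum, mul_assoc]

lemma IsFracSub.const_mul {B : Finset K} {g : K → ℝ} {t c : ℝ} (hg : IsFracSub π B g t)
    (hc0 : 0 ≤ c) (hc1 : c ≤ 1) : IsFracSub π B (fun v => c * g v) (c * t) := by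
  obtain ⟨hbd, hsupp, hmeas⟩ := hg
  refine ⟨fun v => ⟨mul_nonneg hc0 (hbd v).1, mul_le_one₀ hc1 (hbd v).1 (hbd v).2⟩,
    fun v hv => by simp [hsupp v hv], ?_⟩
  simp only [mul_assoc, ← Finset.mul_sum, hmeas]

lemma exists_isFracSub (hπ : ∀ v, 0 ≤ π v) {B : Finset K} {t : ℝ} (ht0 : 0 ≤ t)
    (ht : t ≤ meas π B) : ∃ g : K → ℝ, IsFracSub π B g t := by
  refine ⟨fun v => if v ∈ B then t / meas π B else 0, fun v => ?_, fun v hv => by simp [hv], ?_⟩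
  · dsimp only
    split_ifs
    · exact ⟨div_nonneg ht0 (meas_nonneg hπ B), div_le_one_of_le₀ ht (meas_nonneg hπ B)⟩
    · simp
  · simp only [ite_mul, zero_mul, Finset.sum_ite_mem, Finset.univ_inter, ← Finset.mul_sum]
    rw [← meas]
    rcases (meas_nonneg hπ B).eq_or_lt with h | h
    · rw [← h, mul_zero]
      linarith
    · exact div_mul_cancel₀ t h.ne'

lemma minFlow_le_fracFlow (hP : ∀ u v, 0 ≤ P u v) (hπ : ∀ v, 0 ≤ π v) {B : Finset K}
    {g : K → ℝ} {t : ℝ} (hg : IsFracSub π B g t) : minFlow P π B t ≤ fracFlow P π g Bᶜ :=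
  csInf_le ⟨0, by rintro _ ⟨g, hg, rfl⟩; exact fracFlow_nonneg hP hπ (fun v => (hg.1 v).1) _⟩
    ⟨g, hg, rfl⟩

lemma minFlow_monotoneOn (hP : ∀ u v, 0 ≤ P u v) (hπ : ∀ v, 0 ≤ π v) (B : Finset K) :
    MonotoneOn (minFlow P π B) (Set.Icc 0 (meas π B)) := by
  rintro t₁ ⟨ht₁0, -⟩ t₂ ⟨ht₂0, ht₂⟩ h12
  rcases ht₂0.eq_or_lt with rfl | ht₂pos
  · rw [le_antisymm h12 ht₁0]
  obtain ⟨g₂, hg₂⟩ := exists_isFracSub hπ ht₂0 ht₂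
  refine le_csInf ⟨_, g₂, hg₂, rfl⟩ ?_
  rintro _ ⟨g, hg, rfl⟩
  have hc0 : 0 ≤ t₁ / t₂ := div_nonneg ht₁0 ht₂pos.le
  have hc1 : t₁ / t₂ ≤ 1 := div_le_one_of_le₀ h12 ht₂pos.le
  have hscaled := hg.const_mul hc0 hc1
  rw [div_mul_cancel₀ t₁ ht₂pos.ne'] at hscaled
  calc minFlow P π B t₁ ≤ fracFlow P π (fun v => t₁ / t₂ * g v) Bᶜ :=
        minFlow_le_fracFlow hP hπ hscaled
    _ = t₁ / t₂ * fracFlow P π g Bᶜ := fracFlow_const_mul _ _ _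
    _ ≤ fracFlow P π g Bᶜ :=
        mul_le_of_le_one_left (fracFlow_nonneg hP hπ (fun v => (hg.1 v).1) _) hc1

lemma minFlow_meas_add_le (hP : ∀ u v, 0 ≤ P u v) (hπ : ∀ v, 0 < π v) {B S : Finset K} {v : K}
    (hS : S ⊆ B) (hvB : v ∈ B) (hvS : v ∉ S) {s : ℝ} (hs0 : 0 ≤ s) (hs : s ≤ π v) :
    minFlow P π B (meas π S + s) ≤ Qone P π S Bᶜ + setProb P v Bᶜ * s := by
  set g : K → ℝ := fun w => (if w ∈ S then 1 else 0) + (if w = v then s / π v else 0)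
  have hsum : ∀ f : K → ℝ, ∑ w, g w * f w = ∑ w ∈ S, f w + s / π v * f v := fun f => by
    simp only [g, add_mul, ite_mul, one_mul, zero_mul, Finset.sum_add_distrib,
      Finset.sum_ite_mem, Finset.univ_inter, Finset.sum_ite_eq', Finset.mem_univ, if_true]
  have hg : IsFracSub π B g (meas π S + s) := by
    refine ⟨fun w => ?_, fun w hw => ?_, ?_⟩
    · obtain rfl | hwv := eq_or_ne w v
      · simp only [g, hvS, if_true, if_false, zero_add]
        exact ⟨div_nonneg hs0 (hπ w).le, div_le_one_of_le₀ hs (hπ w).le⟩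
      · by_cases hwS : w ∈ S <;> simp [g, hwS, hwv]
    · have hwS : w ∉ S := fun h => hw (hS h)
      have hwv : w ≠ v := fun h => hw (h ▸ hvB)
      simp [g, hwS, hwv]
    · rw [hsum, div_mul_cancel₀ s (hπ v).ne', meas]
  calc minFlow P π B (meas π S + s) ≤ fracFlow P π g Bᶜ :=
        minFlow_le_fracFlow hP (fun w => (hπ w).le) hg
    _ = ∑ w, g w * (π w * setProb P w Bᶜ) := by simp only [fracFlow, mul_assoc]
    _ = Qone P π S Bᶜ + setProb P v Bᶜ * s := by
        rw [hsum, Qone]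
        field_simp [(hπ v).ne']
        simp only [mul_comm]

lemma minFlow_intervalIntegrable (hP : ∀ u v, 0 ≤ P u v) (hπ : ∀ v, 0 ≤ π v) (B : Finset K)
    {a b : ℝ} (ha : a ∈ Set.Icc 0 (meas π B)) (hb : b ∈ Set.Icc 0 (meas π B)) :
    IntervalIntegrable (minFlow P π B) volume a b :=
  ((minFlow_monotoneOn hP hπ B).mono (Set.uIcc_subset_Icc ha hb)).intervalIntegrable

omit [Fintype K] in
lemma Qone_le_sqrt_mul_Qtwo (hP : ∀ u v, 0 ≤ P u v) (hπ : ∀ v, 0 ≤ π v) {C D : Finset K}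
    {c : ℝ} (hc : ∀ w ∈ C, setProb P w D ≤ c) : Qone P π C D ≤ √c * Qtwo P π C D := by
  rw [Qone, Qtwo, Finset.mul_sum]
  refine Finset.sum_le_sum fun w hw => ?_
  calc setProb P w D * π w = √(setProb P w D) * √(setProb P w D) * π w := by
        rw [Real.mul_self_sqrt (setProb_nonneg hP w D)]
    _ ≤ √c * √(setProb P w D) * π w := by
        gcongr
        · exact hπ w
        · exact hc w hw
    _ = √c * (√(setProb P w D) * π w) := mul_assoc _ _ _

omit [Fintype K] in
lemma integral_const_add_mul_sub (c q m p : ℝ) :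
   ∫ t in m..m + p, (c + q * (t - m)) = c * p + q * p ^ 2 / 2 := by
  rw [intervalIntegral.integral_comp_sub_right (fun x => c + q * x) m]
  simp only [sub_self]
  rw [intervalIntegral.integral_add intervalIntegrable_const
    (intervalIntegral.intervalIntegrable_id.const_mul q), intervalIntegral.integral_const,
    intervalIntegral.integral_const_mul, integral_id]
  simp only [smul_eq_mul, sub_zero]
  ring

lemma integral_minFlow_meas_add_le (hP : ∀ u v, 0 ≤ P u v) (hπ : ∀ v, 0 < π v)
    {B S : Finset K} {v : K} (hS : S ⊆ B) (hvB : v ∈ B) (hvS : v ∉ S) :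
    ∫ t in meas π S..meas π S + π v, minFlow P π B t
      ≤ Qone P π S Bᶜ * π v + setProb P v Bᶜ * π v ^ 2 / 2 := by
  have hπ0 : ∀ w, 0 ≤ π w := fun w => (hπ w).le
  have hSvB : meas π S + π v ≤ meas π B := by
    rw [add_comm, meas, ← Finset.sum_insert hvS]
    exact meas_mono hπ0 (Finset.insert_subset hvB hS)
  have hS0 := meas_nonneg hπ0 S
  rw [← integral_const_add_mul_sub]
  refine intervalIntegral.integral_mono_on (by linarith [hπ v])
    (minFlow_intervalIntegrable hP hπ0 B ⟨hS0, by linarith [hπ v]⟩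
      ⟨by linarith [hπ v], hSvB⟩)
    ((by fun_prop : Continuous fun t => _ + _ * (t - meas π S)).intervalIntegrable _ _)
    fun t ht => ?_
  have := minFlow_meas_add_le hP hπ hS hvB hvS (s := t - meas π S) (by linarith [ht.1])
    (by linarith [ht.2])
  rwa [add_sub_cancel] at this

lemma integral_minFlow_le (hP : ∀ u v, 0 ≤ P u v) (hπ : ∀ v, 0 < π v) {B S : Finset K}
    (hS : S ⊆ B) : ∫ t in 0..meas π S, minFlow P π B t ≤ 1 / 2 * Qtwo P π S Bᶜ ^ 2 := by
  have hπ0 : ∀ w, 0 ≤ π w := fun w => (hπ w).le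
  induction S using Finset.induction_on_max_value (fun v => setProb P v Bᶜ) with
  | empty => simp [meas, Qtwo]
  | insert v S hvS hmax ih =>
    have hS' : S ⊆ B := (Finset.subset_insert v S).trans hS
    have hvB : v ∈ B := hS (Finset.mem_insert_self v S)
    set q := setProb P v Bᶜ
    set T := Qtwo P π S Bᶜ
    have hmeas : meas π (insert v S) = meas π S + π v := by
      rw [meas, Finset.sum_insert hvS, add_comm]; rfl
    have hQtwo : Qtwo P π (insert v S) Bᶜ = T + √q * π v := by
      rw [Qtwo, Finset.sum_insert hvS, add_comm]; rfl
    have hQone : Qone P π S Bᶜ ≤ √q * T := Qone_le_sqrt_mul_Qtwo hP hπ0 hmax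
    have hsq : √q ^ 2 = q := Real.sq_sqrt (setProb_nonneg hP v Bᶜ)
    have hS0 := meas_nonneg hπ0 S
    have hSvB : meas π S + π v ≤ meas π B := hmeas ▸ meas_mono hπ0 hS
    calc ∫ t in 0..meas π (insert v S), minFlow P π B t
        = (∫ t in 0..meas π S, minFlow P π B t)
          + ∫ t in meas π S..meas π S + π v, minFlow P π B t := by
          rw [hmeas, intervalIntegral.integral_add_adjacent_intervals
            (minFlow_intervalIntegrable hP hπ0 B ⟨le_rfl, by linarith [hπ v]⟩
              ⟨hS0, by linarith [hπ v]⟩)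
            (minFlow_intervalIntegrable hP hπ0 B ⟨hS0, by linarith [hπ v]⟩
              ⟨by linarith [hπ v], hSvB⟩)]
      _ ≤ 1 / 2 * T ^ 2 + (√q * T * π v + q * π v ^ 2 / 2) := by
          gcongr
          · exact ih hS'
          · exact (integral_minFlow_meas_add_le hP hπ hS' hvB hvS).trans
              (by linarith [mul_le_mul_of_nonneg_right hQone (hπ0 v)])
      _ = 1 / 2 * Qtwo P π (insert v S) Bᶜ ^ 2 := by
          rw [hQtwo]
          linear_combination (-(π v ^ 2 / 2)) * hsq

lemma integral_Psi_le_left (hP : ∀ u v, 0 ≤ P u v) (hπ : ∀ v, 0 < π v) (A : Finset K) :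
    ∫ t in 0..meas π A, Psi P π A t ≤ 1 / 2 * Qtwo P π A Aᶜ ^ 2 := by
  rw [intervalIntegral.integral_congr fun t ht => Psi_of_le (P := P) ?_]
  · exact integral_minFlow_le hP hπ subset_rfl
  · rw [Set.uIcc_of_le (meas_nonneg (fun w => (hπ w).le) A)] at ht
    exact ht.2

lemma meas_compl (hπsum : ∑ v, π v = 1) (A : Finset K) : meas π Aᶜ = 1 - meas π A := by
  rw [meas, meas, ← hπsum, ← Finset.sum_add_sum_compl A π, add_sub_cancel_left]

lemma integral_Psi_le_right (hP : ∀ u v, 0 ≤ P u v) (hπ : ∀ v, 0 < π v)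
    (hπsum : ∑ v, π v = 1) (A : Finset K) :
    ∫ t in meas π A..1, Psi P π A t ≤ 1 / 2 * Qtwo P π Aᶜ A ^ 2 := by
  have hA1 : meas π A ≤ 1 := by
    linarith [meas_compl hπsum A, meas_nonneg (fun w => (hπ w).le) Aᶜ]
  rw [intervalIntegral.integral_congr_ae (g := fun t => minFlow P π Aᶜ (1 - t))
    (Filter.Eventually.of_forall fun t ht => Psi_of_lt ?_), intervalIntegral.integral_comp_sub_left
    (minFlow P π Aᶜ), sub_self, ← meas_compl hπsum]
  · simpa only [compl_compl] using integral_minFlow_le (B := Aᶜ) hP hπ subset_rfl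
  · rw [Set.uIoc_of_le hA1] at ht
    exact ht.1

theorem spread_le_half_gradient_sq_general
    (P : K → K → ℝ) (π : K → ℝ) (A : Finset K)
    (hM : IsMarkov P π)
    (hA : meas π A ≤ 1 / 2) :
    psiPlus P π A ≤ (1 / 2) * hTwoP P π A ^ 2 ∧
    psiMinus P π A ≤ (1 / 2) * hTwoM P π A ^ 2 := by
  have hmin : min (meas π A) (meas π Aᶜ) = meas π A :=
    min_eq_left (by linarith [meas_compl hM.piSum A])
  simp only [psiPlus, psiMinus, hTwoP, hTwoM, hmin, div_pow, ← mul_div_assoc]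
  exact ⟨div_le_div_of_nonneg_right (integral_Psi_le_left hM.nonneg hM.piPos A) (sq_nonneg _),
    div_le_div_of_nonneg_right (integral_Psi_le_right hM.nonneg hM.piPos hM.piSum A)
      (sq_nonneg _)⟩

/-- `ψ⁺(A) ≤ (1/2)·h₂⁺(A)²` and `ψ⁻(A) ≤ (1/2)·h₂⁻(A)²`. -/
theorem spread_le_half_gradient_sq
    (P : K → K → ℝ) (π : K → ℝ) (A : Finset K)
    (hM : IsMarkov P π) (hlazy : IsLazy P)
    (hirr : MCIrreducible P) (hap : MCAperiodic P)
    (hA0 : 0 < meas π A) (hA : meas π A ≤ 1 / 2) :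
    psiPlus P π A ≤ (1 / 2) * hTwoP P π A ^ 2 ∧
    psiMinus P π A ≤ (1 / 2) * hTwoM P π A ^ 2 :=
  spread_le_half_gradient_sq_general P π A hM hA
end
end
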